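/- Let {k_μ}_{μ=1}^m (m ≥ 2) be a rank-1 POVM on ℂ^d that admits a product Naimark extension, and suppose k₂ = c·k₁ for some c ∈ ℂ, with k₁ ≠ 0. Define k₁₂ = √(1 + |c|²)·k₁, so that |k₁₂⟩⟨k₁₂| = |k₁⟩⟨k₁| + |k₂⟩⟨k₂|. Then the family {k₁₂, k₃, …, k_m} (with m − 1 outcomes) is a rank-1 POVM on ℂ^d, and it also admits a product Naimark extension. -/

import Mathlib

open scoped InnerProductSpace

/-- The rank-one operator `|k⟩⟨k| : x ↦ ⟨k, x⟩ • k` on `ℂ^d`. -/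
noncomputable def rankOne {d : ℕ} (k : EuclideanSpace ℂ (Fin d)) :
    EuclideanSpace ℂ (Fin d) →ₗ[ℂ] EuclideanSpace ℂ (Fin d) where
  toFun x := ⟪k, x⟫_ℂ • k
  map_add' x y := by simp [inner_add_right, add_smul]
  map_smul' c x := by simp [inner_smul_right, smul_smul]

/-- The product vector `ψ ⊗ a` in `ℂ^d ⊗ ℂ^e`, modeled as `ℂ^{d·e}`. -/
def tp {d e : ℕ} (ψ : EuclideanSpace ℂ (Fin d)) (a : EuclideanSpace ℂ (Fin e)) :
    EuclideanSpace ℂ (Fin d × Fin e) :=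
  WithLp.toLp 2 (fun p : Fin d × Fin e => ψ p.1 * a p.2)

/-- The family `{k_μ}_{μ ∈ ι}` is a rank-1 POVM on `ℂ^d`: `∑_μ |k_μ⟩⟨k_μ| = I`. -/
def IsPOVM {d : ℕ} {ι : Type*} [Fintype ι] (k : ι → EuclideanSpace ℂ (Fin d)) : Prop :=
  ∑ μ, rankOne (k μ) = LinearMap.id

/-- The rank-1 POVM `{k_μ}_{μ ∈ ι}` on `ℂ^d` admits a *product Naimark extension*
(equivalently, has zero entanglement cost): for some ancilla dimension `e` and unit
vector `a₀ ∈ ℂ^e`, there is an orthonormal basis of `ℂ^d ⊗ ℂ^e` (indexed by `ι` plus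
`t` further indices, `card ι + t = d·e`) whose `ι`-members `w_μ` satisfy
`|⟨ψ ⊗ a₀, w_μ⟩|² = |⟨ψ, k_μ⟩|²` and are product vectors, the remaining members being
orthogonal to every `ψ ⊗ a₀`. -/
def HasProductNaimark {d : ℕ} {ι : Type*} [Fintype ι]
    (k : ι → EuclideanSpace ℂ (Fin d)) : Prop :=
  ∃ (e t : ℕ) (a₀ : EuclideanSpace ℂ (Fin e))
    (w : ι ⊕ Fin t → EuclideanSpace ℂ (Fin d × Fin e)),
    ‖a₀‖ = 1 ∧ Fintype.card ι + t = d * e ∧ Orthonormal ℂ w ∧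
    (∀ (μ : ι) (ψ : EuclideanSpace ℂ (Fin d)),
      ‖⟪tp ψ a₀, w (Sum.inl μ)⟫_ℂ‖ ^ 2 = ‖⟪ψ, k μ⟫_ℂ‖ ^ 2) ∧
    (∀ (ν : Fin t) (ψ : EuclideanSpace ℂ (Fin d)), ⟪tp ψ a₀, w (Sum.inr ν)⟫_ℂ = 0) ∧
    (∀ μ : ι, ∃ (x : EuclideanSpace ℂ (Fin d)) (y : EuclideanSpace ℂ (Fin e)),
      w (Sum.inl μ) = tp x y)

-- auxiliary lemmas
private lemma sq_eq_of_nonneg {a b : ℝ} (ha : 0 ≤ a) (hb : 0 ≤ b) (h : a ^ 2 = b ^ 2) :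
    a = b := by nlinarith

noncomputable def contract {d e : ℕ} (a₀ : EuclideanSpace ℂ (Fin e))
    (w : EuclideanSpace ℂ (Fin d × Fin e)) : EuclideanSpace ℂ (Fin d) :=
  WithLp.toLp 2 (fun j => ∑ β, (starRingEnd ℂ) (a₀ β) * w (j, β))

lemma inner_tp_left {d e : ℕ} (ψ : EuclideanSpace ℂ (Fin d)) (a₀ : EuclideanSpace ℂ (Fin e))
    (w : EuclideanSpace ℂ (Fin d × Fin e)) :
    ⟪tp ψ a₀, w⟫_ℂ = ⟪ψ, contract a₀ w⟫_ℂ := by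
  simp only [PiLp.inner_apply, RCLike.inner_apply, contract, tp]
  rw [← Finset.univ_product_univ, Finset.sum_product]
  refine Finset.sum_congr rfl (fun j _ => ?_)
  rw [Finset.sum_mul]
  exact Finset.sum_congr rfl (fun β _ => by simp [map_mul]; ring)

lemma contract_tp {d e : ℕ} (a₀ y : EuclideanSpace ℂ (Fin e)) (x : EuclideanSpace ℂ (Fin d)) :
    contract a₀ (tp x y) = ⟪a₀, y⟫_ℂ • x := by
  ext j
  show ∑ β, (starRingEnd ℂ) (a₀ β) * (x j * y β) = (∑ β, y β * (starRingEnd ℂ) (a₀ β)) * x j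
  rw [Finset.sum_mul]
  exact Finset.sum_congr rfl (fun β _ => by ring)

lemma smul_tp {d e : ℕ} (a : ℂ) (x : EuclideanSpace ℂ (Fin d)) (y : EuclideanSpace ℂ (Fin e)) :
    a • tp x y = tp x (a • y) := by
  ext p
  show a * (x p.1 * y p.2) = x p.1 * (a * y p.2)
  ring

lemma tp_smul_left {d e : ℕ} (a : ℂ) (x : EuclideanSpace ℂ (Fin d)) (y : EuclideanSpace ℂ (Fin e)) :
    tp (a • x) y = tp x (a • y) := by
  ext p
  show (a * x p.1) * y p.2 = x p.1 * (a * y p.2)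
  ring

lemma tp_add_right {d e : ℕ} (x : EuclideanSpace ℂ (Fin d)) (y y' : EuclideanSpace ℂ (Fin e)) :
    tp x (y + y') = tp x y + tp x y' := by
  ext p
  show x p.1 * (y p.2 + y' p.2) = x p.1 * y p.2 + x p.1 * y' p.2
  ring

lemma parallel_of_abs_inner {d : ℕ} {v k : EuclideanSpace ℂ (Fin d)} (hk : k ≠ 0)
    (h : ∀ ψ, ‖⟪ψ, v⟫_ℂ‖ = ‖⟪ψ, k⟫_ℂ‖) :
    ∃ θ : ℂ, ‖θ‖ = 1 ∧ v = θ • k := by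
  have hmem : v ∈ Submodule.span ℂ ({k} : Set (EuclideanSpace ℂ (Fin d))) := by
    rw [← Submodule.orthogonal_orthogonal (Submodule.span ℂ {k})]
    rw [Submodule.mem_orthogonal]
    intro u hu
    have hk0 : ⟪u, k⟫_ℂ = 0 :=
      (Submodule.mem_orthogonal' _ _).mp hu k (Submodule.mem_span_singleton_self k)
    have := h u
    rw [hk0] at this
    simpa using this
  obtain ⟨a, ha⟩ := Submodule.mem_span_singleton.mp hmem
  refine ⟨a, ?_, ha.symm⟩
  have hkk : ⟪k, k⟫_ℂ ≠ 0 := fun h0 => hk (inner_self_eq_zero.mp h0)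
  have habs : ‖⟪k, k⟫_ℂ‖ ≠ 0 := norm_ne_zero_iff.mpr hkk
  have := h k
  rw [← ha, inner_smul_right, norm_mul] at this
  have h1 : ‖a‖ * ‖⟪k, k⟫_ℂ‖ = 1 * ‖⟪k, k⟫_ℂ‖ := by
    rw [one_mul]; exact this
  exact mul_right_cancel₀ habs h1
/-- Let `{k_μ}_{μ=1}^{m+2}` be a rank-1 POVM on `ℂ^d` admitting a
product Naimark extension, with `k₂ = c·k₁` and `k₁ ≠ 0`.  Merging the two parallel
elements into `k₁₂ = √(1+|c|²)·k₁` (so `|k₁₂⟩⟨k₁₂| = |k₁⟩⟨k₁| + |k₂⟩⟨k₂|`) yields a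
rank-1 POVM with one fewer outcome that again admits a product Naimark extension. -/
theorem merge_parallel_elements_zero_cost {d m : ℕ}
    (k : Fin (m + 2) → EuclideanSpace ℂ (Fin d)) (hk : IsPOVM k)
    (hprod : HasProductNaimark k)
    (c : ℂ) (hpar : k 1 = c • k 0) (hk0 : k 0 ≠ 0)
    (k' : Fin (m + 1) → EuclideanSpace ℂ (Fin d))
    (hk' : k' = fun i : Fin (m + 1) =>
      Fin.cases ((Real.sqrt (1 + ‖c‖ ^ 2) : ℂ) • k 0)
        (fun j : Fin m => k j.succ.succ) i) :
    IsPOVM k' ∧ HasProductNaimark k' := by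
  constructor
  · -- IsPOVM
    have hmerge : rankOne (((Real.sqrt (1 + ‖c‖ ^ 2) : ℝ) : ℂ) • k 0)
        = rankOne (k 0) + rankOne (k 1) := by
      apply LinearMap.ext; intro x
      show ⟪_, x⟫_ℂ • _ = ⟪k 0, x⟫_ℂ • k 0 + ⟪k 1, x⟫_ℂ • k 1
      rw [hpar, inner_smul_left, inner_smul_left, smul_smul, smul_smul]
      rw [← add_smul]
      congr 1
      have h1 : ((starRingEnd ℂ) ((Real.sqrt (1 + ‖c‖ ^ 2) : ℝ) : ℂ)) =
          ((Real.sqrt (1 + ‖c‖ ^ 2) : ℝ) : ℂ) := Complex.conj_ofReal _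
      rw [h1]
      have h2 : (((Real.sqrt (1 + ‖c‖ ^ 2) : ℝ) : ℂ)) *
          (((Real.sqrt (1 + ‖c‖ ^ 2) : ℝ) : ℂ)) = 1 + ((‖c‖ ^ 2 : ℝ) : ℂ) := by
        rw [← Complex.ofReal_mul, Real.mul_self_sqrt (by positivity)]
        push_cast
        ring
      have h3 : (starRingEnd ℂ) c * c = ((‖c‖ ^ 2 : ℝ) : ℂ) := by
        rw [mul_comm, Complex.mul_conj, Complex.normSq_eq_norm_sq]
      calc ((Real.sqrt (1 + ‖c‖ ^ 2) : ℝ) : ℂ) * ⟪k 0, x⟫_ℂ *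
            ((Real.sqrt (1 + ‖c‖ ^ 2) : ℝ) : ℂ)
          = (((Real.sqrt (1 + ‖c‖ ^ 2) : ℝ) : ℂ) *
              ((Real.sqrt (1 + ‖c‖ ^ 2) : ℝ) : ℂ)) * ⟪k 0, x⟫_ℂ := by ring
        _ = (1 + ((‖c‖ ^ 2 : ℝ) : ℂ)) * ⟪k 0, x⟫_ℂ := by rw [h2]
        _ = ⟪k 0, x⟫_ℂ + (starRingEnd ℂ) c * ⟪k 0, x⟫_ℂ * c := by rw [← h3]; ring
    unfold IsPOVM at hk ⊢
    rw [hk', Fin.sum_univ_succ]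
    simp only [Fin.cases_zero, Fin.cases_succ]
    rw [hmerge, ← hk, Fin.sum_univ_succ, Fin.sum_univ_succ, Fin.succ_zero_eq_one]
    abel
  · -- HasProductNaimark
    obtain ⟨e, t, a₀, w, ha₀, hcard, horth, habs, hperp, hprodv⟩ := hprod
    rw [orthonormal_iff_ite] at horth
    set R : ℂ := ((Real.sqrt (1 + ‖c‖ ^ 2) : ℝ) : ℂ) with hRdef
    have hrpos : 0 < Real.sqrt (1 + ‖c‖ ^ 2) := Real.sqrt_pos.mpr (by positivity)
    have hRne : R ≠ 0 := by
      rw [hRdef]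
      exact_mod_cast Complex.ofReal_ne_zero.mpr (ne_of_gt hrpos)
    have hRconj : (starRingEnd ℂ) R = R := Complex.conj_ofReal _
    have hRR : R * R = 1 + ((‖c‖ ^ 2 : ℝ) : ℂ) := by
      rw [hRdef, ← Complex.ofReal_mul, Real.mul_self_sqrt (by positivity)]
      push_cast
      ring
    -- extract parallel structure
    have hv : ∀ μ : Fin (m + 2), ∀ ψ,
        ‖⟪ψ, contract a₀ (w (Sum.inl μ))⟫_ℂ‖ = ‖⟪ψ, k μ⟫_ℂ‖ := by
      intro μ ψ
      have := habs μ ψ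
      rw [inner_tp_left] at this
      exact sq_eq_of_nonneg (norm_nonneg _) (norm_nonneg _) this
    obtain ⟨μ₁, hμ₁abs, hv₁⟩ := parallel_of_abs_inner hk0 (hv 0)
    have hμ₂ex : ∃ μ₂ : ℂ, ‖μ₂‖ = ‖c‖ ∧
        contract a₀ (w (Sum.inl 1)) = μ₂ • k 0 := by
      by_cases hc : c = 0
      · refine ⟨0, by simp [hc], ?_⟩
        have h0 : ‖⟪contract a₀ (w (Sum.inl 1)), contract a₀ (w (Sum.inl 1))⟫_ℂ‖ = 0 := by
          rw [hv 1 _, hpar, hc]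
          simp
        have h1 : ⟪contract a₀ (w (Sum.inl 1)), contract a₀ (w (Sum.inl 1))⟫_ℂ = 0 := by
          simpa using h0
        rw [inner_self_eq_zero.mp h1, zero_smul]
      · have hk1 : k 1 ≠ 0 := by rw [hpar]; exact smul_ne_zero hc hk0
        obtain ⟨θ, hθ, hv2⟩ := parallel_of_abs_inner hk1 (hv 1)
        refine ⟨θ * c, by rw [norm_mul, hθ, one_mul], ?_⟩
        rw [hv2, hpar, smul_smul]
    obtain ⟨μ₂, hμ₂abs, hv₂⟩ := hμ₂ex
    have hμ₁c : μ₁ * (starRingEnd ℂ) μ₁ = 1 := by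
      rw [Complex.mul_conj, Complex.normSq_eq_norm_sq, hμ₁abs]
      norm_num
    have hμ₂c : μ₂ * (starRingEnd ℂ) μ₂ = R * R - 1 := by
      rw [Complex.mul_conj, Complex.normSq_eq_norm_sq, hμ₂abs, hRR]
      push_cast
      ring
    -- inner product facts
    have hIP : ∀ a b a' b' : ℂ,
        ⟪a • w (Sum.inl 0) + b • w (Sum.inl 1), a' • w (Sum.inl 0) + b' • w (Sum.inl 1)⟫_ℂ
          = (starRingEnd ℂ) a * a' + (starRingEnd ℂ) b * b' := by
      intro a b a' b'
      have hW11 : ⟪w (Sum.inl 0), w (Sum.inl 0)⟫_ℂ = 1 := by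
        rw [horth]; exact if_pos rfl
      have hW22 : ⟪w (Sum.inl 1), w (Sum.inl 1)⟫_ℂ = 1 := by
        rw [horth]; exact if_pos rfl
      have h01 : (Sum.inl 0 : Fin (m + 2) ⊕ Fin t) ≠ Sum.inl 1 := by
        intro h
        have := Sum.inl.inj h
        exact (Fin.succ_ne_zero (0 : Fin (m + 1)))
          (by rw [Fin.succ_zero_eq_one]; exact this.symm)
      have hW12 : ⟪w (Sum.inl 0), w (Sum.inl 1)⟫_ℂ = 0 := by
        rw [horth]; exact if_neg h01
      have hW21 : ⟪w (Sum.inl 1), w (Sum.inl 0)⟫_ℂ = 0 := by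
        rw [horth]; exact if_neg (fun h => h01 h.symm)
      rw [inner_add_left, inner_add_right, inner_add_right, inner_smul_left, inner_smul_left,
        inner_smul_left, inner_smul_left, inner_smul_right, inner_smul_right, inner_smul_right,
        inner_smul_right, hW11, hW22, hW12, hW21]
      ring
    have hcross : ∀ (i : Fin (m + 2) ⊕ Fin t), i ≠ Sum.inl 0 → i ≠ Sum.inl 1 → ∀ a b : ℂ,
        ⟪a • w (Sum.inl 0) + b • w (Sum.inl 1), w i⟫_ℂ = 0 ∧
        ⟪w i, a • w (Sum.inl 0) + b • w (Sum.inl 1)⟫_ℂ = 0 := by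
      intro i h0 h1 a b
      have e0 : ⟪w (Sum.inl 0), w i⟫_ℂ = 0 := by
        rw [horth]; exact if_neg (fun h => h0 h.symm)
      have e1 : ⟪w (Sum.inl 1), w i⟫_ℂ = 0 := by
        rw [horth]; exact if_neg (fun h => h1 h.symm)
      have e0' : ⟪w i, w (Sum.inl 0)⟫_ℂ = 0 := by rw [horth]; exact if_neg h0
      have e1' : ⟪w i, w (Sum.inl 1)⟫_ℂ = 0 := by rw [horth]; exact if_neg h1
      constructor
      · rw [inner_add_left, inner_smul_left, inner_smul_left, e0, e1]; ring
      · rw [inner_add_right, inner_smul_right, inner_smul_right, e0', e1']; ring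
    have hne2 : ∀ b : Fin m, (Sum.inl b.succ.succ : Fin (m + 2) ⊕ Fin t) ≠ Sum.inl 0 :=
      fun b h => Fin.succ_ne_zero _ (Sum.inl.inj h)
    have hne3 : ∀ b : Fin m, (Sum.inl b.succ.succ : Fin (m + 2) ⊕ Fin t) ≠ Sum.inl 1 := by
      intro b h
      have h' := Sum.inl.inj h
      rw [← Fin.succ_zero_eq_one, Fin.succ_inj] at h'
      exact Fin.succ_ne_zero _ h'
    set w₁' := (R⁻¹ * (starRingEnd ℂ) μ₁) • w (Sum.inl 0) +
        (R⁻¹ * (starRingEnd ℂ) μ₂) • w (Sum.inl 1) with hw₁'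
    set w₂' := (R⁻¹ * (-μ₂)) • w (Sum.inl 0) + (R⁻¹ * μ₁) • w (Sum.inl 1) with hw₂'
    refine ⟨e, t + 1, a₀,
      Sum.elim (fun i : Fin (m + 1) => Fin.cases w₁' (fun j : Fin m => w (Sum.inl j.succ.succ)) i)
        (fun ν : Fin (t + 1) => Fin.cases w₂' (fun ν' : Fin t => w (Sum.inr ν')) ν),
      ha₀, ?_, ?_, ?_, ?_, ?_⟩
    · simp only [Fintype.card_fin] at hcard ⊢
      omega
    · rw [orthonormal_iff_ite]
      rintro (i | ν) (j | ν') <;> simp only [Sum.elim_inl, Sum.elim_inr]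
      · rcases Fin.eq_zero_or_eq_succ i with rfl | ⟨a, rfl⟩ <;>
          rcases Fin.eq_zero_or_eq_succ j with rfl | ⟨b, rfl⟩ <;>
          simp only [Fin.cases_zero, Fin.cases_succ]
        · rw [if_pos trivial, hw₁', hIP]
          simp only [map_mul, map_inv₀, hRconj, Complex.conj_conj]
          field_simp
          linear_combination hμ₁c + hμ₂c
        · rw [if_neg (fun h => (Fin.succ_ne_zero b) (Sum.inl.inj h).symm), hw₁']
          exact (hcross _ (hne2 b) (hne3 b) _ _).1
        · rw [if_neg (fun h => (Fin.succ_ne_zero a) (Sum.inl.inj h)), hw₁']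
          exact (hcross _ (hne2 a) (hne3 a) _ _).2
        · rw [horth]
          simp [Sum.inl.injEq, Fin.succ_inj]
      · rcases Fin.eq_zero_or_eq_succ i with rfl | ⟨a, rfl⟩ <;>
          rcases Fin.eq_zero_or_eq_succ ν' with rfl | ⟨b, rfl⟩ <;>
          simp only [Fin.cases_zero, Fin.cases_succ]
        · rw [if_neg (by simp), hw₁', hw₂', hIP]
          simp only [map_mul, map_inv₀, map_neg, hRconj, Complex.conj_conj]
          ring
        · rw [if_neg (by simp), hw₁']
          exact (hcross _ (by simp) (by simp) _ _).1
        · rw [if_neg (by simp), hw₂']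
          exact (hcross _ (hne2 a) (hne3 a) _ _).2
        · rw [if_neg (by simp), horth, if_neg (by simp)]
      · rcases Fin.eq_zero_or_eq_succ ν with rfl | ⟨a, rfl⟩ <;>
          rcases Fin.eq_zero_or_eq_succ j with rfl | ⟨b, rfl⟩ <;>
          simp only [Fin.cases_zero, Fin.cases_succ]
        · rw [if_neg (by simp), hw₁', hw₂', hIP]
          simp only [map_mul, map_inv₀, map_neg, hRconj, Complex.conj_conj]
          ring
        · rw [if_neg (by simp), hw₂']
          exact (hcross _ (hne2 b) (hne3 b) _ _).1
        · rw [if_neg (by simp), hw₁']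
          exact (hcross _ (by simp) (by simp) _ _).2
        · rw [if_neg (by simp), horth, if_neg (by simp)]
      · rcases Fin.eq_zero_or_eq_succ ν with rfl | ⟨a, rfl⟩ <;>
          rcases Fin.eq_zero_or_eq_succ ν' with rfl | ⟨b, rfl⟩ <;>
          simp only [Fin.cases_zero, Fin.cases_succ]
        · rw [if_pos trivial, hw₂', hIP]
          simp only [map_mul, map_inv₀, map_neg, hRconj, Complex.conj_conj]
          field_simp
          linear_combination hμ₁c + hμ₂c
        · rw [if_neg (fun h => (Fin.succ_ne_zero b) (Sum.inr.inj h).symm), hw₂']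
          exact (hcross _ (by simp) (by simp) _ _).1
        · rw [if_neg (fun h => (Fin.succ_ne_zero a) (Sum.inr.inj h)), hw₂']
          exact (hcross _ (by simp) (by simp) _ _).2
        · rw [horth]
          simp [Sum.inr.injEq, Fin.succ_inj]
    · intro i ψ
      rcases Fin.eq_zero_or_eq_succ i with rfl | ⟨j, rfl⟩
      · simp only [Sum.elim_inl, Fin.cases_zero]
        have hips : ⟪tp ψ a₀, w₁'⟫_ℂ = ⟪ψ, k' 0⟫_ℂ := by
          rw [hw₁', inner_add_right, inner_smul_right, inner_smul_right, inner_tp_left,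
            inner_tp_left, hv₁, hv₂, inner_smul_right, inner_smul_right, hk']
          simp only [Fin.cases_zero]
          rw [inner_smul_right]
          field_simp
          linear_combination ⟪ψ, k 0⟫_ℂ * hμ₁c + ⟪ψ, k 0⟫_ℂ * hμ₂c
        rw [hips]
      · simp only [Sum.elim_inl, Fin.cases_succ]
        have hk'j : k' j.succ = k j.succ.succ := by rw [hk']; simp
        rw [hk'j]
        exact habs j.succ.succ ψ
    · intro ν ψ
      rcases Fin.eq_zero_or_eq_succ ν with rfl | ⟨ν', rfl⟩
      · simp only [Sum.elim_inr, Fin.cases_zero]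
        rw [hw₂', inner_add_right, inner_smul_right, inner_smul_right, inner_tp_left,
          inner_tp_left, hv₁, hv₂, inner_smul_right, inner_smul_right]
        ring
      · simp only [Sum.elim_inr, Fin.cases_succ]
        exact hperp ν' ψ
    · intro i
      rcases Fin.eq_zero_or_eq_succ i with rfl | ⟨j, rfl⟩
      · simp only [Sum.elim_inl, Fin.cases_zero]
        obtain ⟨x₁, y₁, hxy₁⟩ := hprodv 0
        obtain ⟨x₂, y₂, hxy₂⟩ := hprodv 1
        have hc₁ : ⟪a₀, y₁⟫_ℂ • x₁ = μ₁ • k 0 := by rw [← contract_tp, ← hxy₁, hv₁]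
        have hc₂ : ⟪a₀, y₂⟫_ℂ • x₂ = μ₂ • k 0 := by rw [← contract_tp, ← hxy₂, hv₂]
        by_cases hμ₂0 : μ₂ = 0
        · refine ⟨x₁, (R⁻¹ * (starRingEnd ℂ) μ₁) • y₁, ?_⟩
          rw [hw₁', hμ₂0]
          simp only [map_zero, mul_zero, zero_smul, add_zero]
          rw [hxy₁, smul_tp]
        · have hμ₁0 : μ₁ ≠ 0 := by
            intro h
            rw [h] at hμ₁abs
            simp at hμ₁abs
          have hβ₁ : ⟪a₀, y₁⟫_ℂ ≠ 0 := by
            intro h0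
            rw [h0, zero_smul] at hc₁
            exact (smul_eq_zero.mp hc₁.symm).elim hμ₁0 hk0
          have hβ₂ : ⟪a₀, y₂⟫_ℂ ≠ 0 := by
            intro h0
            rw [h0, zero_smul] at hc₂
            exact (smul_eq_zero.mp hc₂.symm).elim hμ₂0 hk0
          have hx₁ : x₁ = ((⟪a₀, y₁⟫_ℂ)⁻¹ * μ₁) • k 0 := by
            rw [← smul_smul, ← hc₁, smul_smul, inv_mul_cancel₀ hβ₁, one_smul]
          have hx₂ : x₂ = ((⟪a₀, y₂⟫_ℂ)⁻¹ * μ₂) • k 0 := by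
            rw [← smul_smul, ← hc₂, smul_smul, inv_mul_cancel₀ hβ₂, one_smul]
          refine ⟨k 0, (R⁻¹ * (starRingEnd ℂ) μ₁) • (((⟪a₀, y₁⟫_ℂ)⁻¹ * μ₁) • y₁) +
            (R⁻¹ * (starRingEnd ℂ) μ₂) • (((⟪a₀, y₂⟫_ℂ)⁻¹ * μ₂) • y₂), ?_⟩
          rw [hw₁', hxy₁, hxy₂, hx₁, hx₂, tp_smul_left, tp_smul_left, tp_add_right,
            smul_tp, smul_tp]
      · simp only [Sum.elim_inl, Fin.cases_succ]
        exact hprodv j.succ.succ
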